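/- arXiv:1405.5452 — 2 statements merged into one kernel-verified Lean document; each statement's English description precedes it below -/
import Mathlib

section
/- Let I be a monomial ideal of S = K[x_1,...,x_n] with x_1 ∉ I, let S' = K[x_2,...,x_n], I' = I ∩ S', and I'' = (I : x_1). Then there is a direct sum decomposition of K-vector spaces S/I = (S'/I'S') ⊕ x_1(S/I''S), and consequently sdepth_S(S/I) ≥ min{ sdepth_{S'}(S'/I'S'), sdepth_S(S/I'') }. -/
open MvPolynomial

namespace Paper

variable (K : Type) [Field K]

/-- The monomial `x^a` in `K[x_0, …, x_{n-1}]`. -/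
noncomputable def mono (n : ℕ) (a : Fin n → ℕ) : MvPolynomial (Fin n) K :=
  MvPolynomial.monomial (Finsupp.equivFunOnFinite.symm a) 1

/-- A monomial ideal: an ideal generated by the monomials it contains. -/
def IsMonomialIdeal (n : ℕ) (I : Ideal (MvPolynomial (Fin n) K)) : Prop :=
  I = Ideal.span ((mono K n) '' {a | mono K n a ∈ I})

/-- The set of exponent vectors of the minimal monomial generators `G(I)`. -/
def minGen (n : ℕ) (I : Ideal (MvPolynomial (Fin n) K)) : Set (Fin n → ℕ) :=
  {a | mono K n a ∈ I ∧ ∀ i : Fin n, 0 < a i → mono K n (a - Pi.single i 1) ∉ I}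

/-- The monomial ideal generated by a set of exponent vectors. -/
noncomputable def monomialIdealOf (n : ℕ) (A : Set (Fin n → ℕ)) :
    Ideal (MvPolynomial (Fin n) K) :=
  Ideal.span ((mono K n) '' A)

/-- Weakly polymatroidal monomial ideal. -/
def WeaklyPolymatroidal (n : ℕ) (I : Ideal (MvPolynomial (Fin n) K)) : Prop :=
  IsMonomialIdeal K n I ∧
    ∀ a b : Fin n → ℕ, a ∈ minGen K n I → b ∈ minGen K n I →
      ∀ t : Fin n, (∀ s : Fin n, s < t → a s = b s) → b t < a t →
        ∃ j : Fin n, t < j ∧ 0 < b j ∧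
          mono K n (b + Pi.single t 1 - Pi.single j 1) ∈ I

/-- Polymatroidal monomial ideal. -/
def Polymatroidal (n : ℕ) (I : Ideal (MvPolynomial (Fin n) K)) : Prop :=
  IsMonomialIdeal K n I ∧
    (∃ d : ℕ, ∀ a ∈ minGen K n I, ∑ i, a i = d) ∧
    ∀ a b : Fin n → ℕ, a ∈ minGen K n I → b ∈ minGen K n I →
      ∀ i : Fin n, b i < a i →
        ∃ j : Fin n, a j < b j ∧
          (a + Pi.single j 1 - Pi.single i 1) ∈ minGen K n I

/-- `I` has linear quotients with respect to the order `u 0 ≺ u 1 ≺ …` on its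
minimal monomial generators: each colon ideal `(u 0, …, u (i-1)) : u i` is
generated by a subset of the variables. -/
def LinearQuotientsWith (n : ℕ) (I : Ideal (MvPolynomial (Fin n) K)) (t : ℕ)
    (u : Fin t → (Fin n → ℕ)) : Prop :=
  Function.Injective u ∧ Set.range u = minGen K n I ∧
    ∀ i : Fin t, 0 < (i : ℕ) →
      ∃ V : Set (Fin n),
        Submodule.colon (monomialIdealOf K n (u '' {j | (j : ℕ) < (i : ℕ)}))
            (Ideal.span {mono K n (u i)}) =
          Ideal.span ((fun k => (X k : MvPolynomial (Fin n) K)) '' V)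

/-- `pd_R M ≤ d`, defined recursively via kernels of surjections from projectives. -/
def HasProjDimLE (R : Type) [CommRing R] :
    ℕ → ∀ (M : Type) [AddCommGroup M] [Module R M], Prop
  | 0, M, _, _ => Module.Projective R M
  | (d + 1), M, _, _ =>
      ∃ (P : Type) (_ : AddCommGroup P) (_ : Module R P) (f : P →ₗ[R] M),
        Module.Projective R P ∧ Function.Surjective f ∧
          HasProjDimLE R d (LinearMap.ker f)

/-- The projective dimension of `M` over `R`, as an element of `ℕ∞`. -/
noncomputable def projDim (R : Type) [CommRing R] (M : Type) [AddCommGroup M]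
    [Module R M] : ℕ∞ :=
  sInf ((↑) '' {d : ℕ | HasProjDimLE R d M})

/-- The depth of `M` with respect to the ideal `J`: the supremum of the lengths of
`M`-regular sequences consisting of elements of `J`. -/
noncomputable def depth (R : Type) [CommRing R] (J : Ideal R) (M : Type)
    [AddCommGroup M] [Module R M] : ℕ∞ :=
  sSup ((↑) '' {k : ℕ | ∃ rs : List R, rs.length = k ∧ (∀ r ∈ rs, r ∈ J) ∧
    RingTheory.Sequence.IsRegular M rs})

/-- The graded maximal ideal `(x_0, …, x_{n-1})` of `K[x_0, …, x_{n-1}]`. -/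
noncomputable def maxIdeal (n : ℕ) : Ideal (MvPolynomial (Fin n) K) :=
  Ideal.span (Set.range X)

/-- The Stanley space `x^a · K[Z]`, as a `K`-subspace of `K[x_0, …, x_{n-1}]`. -/
noncomputable def stanleySpace (n : ℕ) (a : Fin n → ℕ) (Z : Finset (Fin n)) :
    Submodule K (MvPolynomial (Fin n) K) :=
  Submodule.span K ((fun e => mono K n (a + e)) '' {e | ∀ j, j ∉ Z → e j = 0})

/-- A Stanley decomposition of `S/I`: a `K`-vector space decomposition
`S = I ⊕ (⊕ᵢ x^{a i} K[Z i])`. -/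
def IsStanleyDecOfQuot (n : ℕ) (I : Ideal (MvPolynomial (Fin n) K)) (t : ℕ)
    (a : Fin t → (Fin n → ℕ)) (Z : Fin t → Finset (Fin n)) : Prop :=
  iSupIndep (fun o : Option (Fin t) =>
      o.elim (Submodule.restrictScalars K I) (fun i => stanleySpace K n (a i) (Z i))) ∧
    (⨆ o : Option (Fin t),
      o.elim (Submodule.restrictScalars K I) (fun i => stanleySpace K n (a i) (Z i))) = ⊤

/-- The Stanley depth of `S/I`. -/
noncomputable def sdepthQuot (n : ℕ) (I : Ideal (MvPolynomial (Fin n) K)) : ℕ∞ :=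
  sSup ((↑) '' {d : ℕ | ∃ (t : ℕ) (a : Fin t → (Fin n → ℕ)) (Z : Fin t → Finset (Fin n)),
    IsStanleyDecOfQuot K n I t a Z ∧ ∀ i, d ≤ (Z i).card})

/-- A Stanley decomposition of the ideal `I` itself: `I = ⊕ᵢ x^{a i} K[Z i]`
as `K`-vector spaces. -/
def IsStanleyDecOfIdeal (n : ℕ) (I : Ideal (MvPolynomial (Fin n) K)) (t : ℕ)
    (a : Fin t → (Fin n → ℕ)) (Z : Fin t → Finset (Fin n)) : Prop :=
  iSupIndep (fun i : Fin t => stanleySpace K n (a i) (Z i)) ∧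
    (⨆ i : Fin t, stanleySpace K n (a i) (Z i)) = Submodule.restrictScalars K I

/-- The Stanley depth of the ideal `I`. -/
noncomputable def sdepthIdeal (n : ℕ) (I : Ideal (MvPolynomial (Fin n) K)) : ℕ∞ :=
  sSup ((↑) '' {d : ℕ | ∃ (t : ℕ) (a : Fin t → (Fin n → ℕ)) (Z : Fin t → Finset (Fin n)),
    IsStanleyDecOfIdeal K n I t a Z ∧ ∀ i, d ≤ (Z i).card})

end Paper

/-!
A monomial ideal `J` is, as a `K`-vector space, spanned by the monomials it contains, so the
standard monomials `x^c ∉ J` form a basis of `S/J`, and a Stanley decomposition of `S/J` amounts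
to a partition of the standard exponents into the exponent sets of its Stanley spaces.

The paper's `x₁` is `X 0` here. A standard exponent `c` of `I` either has `c 0 = 0`, and then
it is a standard exponent of `I' = I ∩ S'` preceded by a zero, or `c 0 > 0`, and then `c - e₀` is a
standard exponent of `I'' = (I : x₁)`. Splitting the basis this way gives the isomorphism, and
gluing a Stanley decomposition of `S'/I'` (lifted to `S`) with one of `S/I''` (multiplied by `x₁`)
gives a Stanley decomposition of `S/I` with Stanley spaces of the same dimensions, hence the
inequality.
-/

open MvPolynomial Function Set

section Partition

variable {α β γ ι κ : Type*}

def IsPartitionOf (E : ι → Set α) (U : Set α) : Prop :=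
  Pairwise (Disjoint on E) ∧ ⋃ i, E i = U

lemma isPartitionOf_comp_equiv_iff {E : ι → Set α} {U : Set α} (e : κ ≃ ι) :
    IsPartitionOf (E ∘ e) U ↔ IsPartitionOf E U :=
  and_congr (EquivLike.pairwise_comp_iff e (Disjoint on E)) (by
    rw [comp_def, e.surjective.iUnion_comp E])

lemma pairwise_disjoint_option_elim_iff {T : Set α} {E : ι → Set α} :
    Pairwise (Disjoint on fun o : Option ι => o.elim T E) ↔
      Disjoint T (⋃ i, E i) ∧ Pairwise (Disjoint on E) := by
  rw [disjoint_iUnion_right]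
  refine ⟨fun h => ⟨fun i => h (Option.some_ne_none i).symm,
    fun i j hij => h (Option.some_injective _ |>.ne hij)⟩, ?_⟩
  rintro ⟨hT, hE⟩ (_ | i) (_ | j) hij
  · exact absurd rfl hij
  · exact hT j
  · exact (hT i).symm
  · exact hE (fun h => hij (congrArg some h))

lemma isPartitionOf_option_elim_univ_iff {T : Set α} {E : ι → Set α} :
    IsPartitionOf (fun o : Option ι => o.elim T E) univ ↔ IsPartitionOf E Tᶜ := by
  rw [IsPartitionOf, IsPartitionOf, pairwise_disjoint_option_elim_iff, iUnion_option,
    eq_compl_comm, eq_compl_iff_isCompl, isCompl_iff, codisjoint_iff]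
  exact ⟨fun ⟨⟨hd, hp⟩, hu⟩ => ⟨hp, hd, hu⟩, fun ⟨hp, hd, hu⟩ => ⟨⟨hd, hp⟩, hu⟩⟩

lemma IsPartitionOf.sumElim_image {E₁ : ι → Set β} {E₂ : κ → Set γ} {U₁ : Set β} {U₂ : Set γ}
    {f : β → α} {g : γ → α} (hf : Injective f) (hg : Injective g)
    (hfg : Disjoint (range f) (range g)) (h₁ : IsPartitionOf E₁ U₁) (h₂ : IsPartitionOf E₂ U₂) :
    IsPartitionOf (Sum.elim (fun i => f '' E₁ i) (fun j => g '' E₂ j)) (f '' U₁ ∪ g '' U₂) := by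
  refine ⟨?_, ?_⟩
  · rintro (i | j) (i' | j') hne
    · exact (disjoint_image_iff hf).2 (h₁.1 fun h => hne (congrArg _ h))
    · exact hfg.mono (image_subset_range _ _) (image_subset_range _ _)
    · exact hfg.symm.mono (image_subset_range _ _) (image_subset_range _ _)
    · exact (disjoint_image_iff hg).2 (h₂.1 fun h => hne (congrArg _ h))
  · rw [iUnion_sum, ← h₁.2, ← h₂.2, image_iUnion, image_iUnion]
    rfl

lemma compl_eq_image_compl_preimage_union {f : β → α} {g : γ → α}
    (hfg : Codisjoint (range f) (range g)) (T : Set α) :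
    Tᶜ = f '' (f ⁻¹' T)ᶜ ∪ g '' (g ⁻¹' T)ᶜ := by
  rw [image_compl_preimage, image_compl_preimage, ← union_sdiff_distrib,
    show range f ∪ range g = univ from codisjoint_iff.1 hfg, compl_eq_univ_sdiff]

noncomputable def complEquivSumPreimageCompl {f : β → α} {g : γ → α}
    (hf : Injective f) (hg : Injective g) (hfg : IsCompl (range f) (range g)) (T : Set α) :
    ↥Tᶜ ≃ ↥(f ⁻¹' T)ᶜ ⊕ ↥(g ⁻¹' T)ᶜ := by
  classical
  exact (Equiv.setCongr (compl_eq_image_compl_preimage_union hfg.codisjoint T)).trans <|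
    (Equiv.Set.union (hfg.disjoint.mono (image_subset_range _ _) (image_subset_range _ _))).trans <|
      Equiv.sumCongr (Equiv.Set.image f _ hf).symm (Equiv.Set.image g _ hg).symm

end Partition

namespace MvPolynomial

variable {σ τ R : Type*}

section CommSemiring

variable [CommSemiring R]

lemma restrictSupport_iUnion {ι : Sort*} (s : ι → Set (σ →₀ ℕ)) :
    restrictSupport R (⋃ i, s i) = ⨆ i, restrictSupport R (s i) := by
  simp only [restrictSupport_eq_span, image_iUnion, Submodule.span_iUnion]

lemma restrictSupport_union (s t : Set (σ →₀ ℕ)) :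
    restrictSupport R (s ∪ t) = restrictSupport R s ⊔ restrictSupport R t := by
  simp only [restrictSupport_eq_span, image_union, Submodule.span_union]

lemma disjoint_restrictSupport {s t : Set (σ →₀ ℕ)} (h : Disjoint s t) :
    Disjoint (restrictSupport R s) (restrictSupport R t) := by
  refine Submodule.disjoint_def.2 fun p hs ht => ?_
  rw [mem_restrictSupport_iff] at hs ht
  rw [← support_eq_empty, ← Finset.coe_eq_empty, ← subset_empty_iff]
  exact (subset_inter hs ht).trans (Set.disjoint_iff.1 h)

def monomialExps (J : Ideal (MvPolynomial σ R)) : Set (σ →₀ ℕ) :=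
  {c | monomial c 1 ∈ J}

lemma span_monomialExps_le (J : Ideal (MvPolynomial σ R)) :
    Ideal.span ((monomial · 1) '' monomialExps J) ≤ J :=
  Ideal.span_le.2 (by rintro _ ⟨c, hc, rfl⟩; exact hc)

lemma mem_span_monomialExps_iff {J : Ideal (MvPolynomial σ R)} {p : MvPolynomial σ R} :
    p ∈ Ideal.span ((monomial · 1) '' monomialExps J) ↔ ↑p.support ⊆ monomialExps J := by
  rw [mem_ideal_span_monomial_image]
  refine ⟨fun h c hc => ?_, fun h c hc => ⟨c, h hc, le_rfl⟩⟩
  obtain ⟨d, hd, hdc⟩ := h c hc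
  have : monomial c (1 : R) = monomial (c - d) 1 * monomial d 1 := by
    rw [monomial_mul, tsub_add_cancel_of_le hdc, one_mul]
  exact (this ▸ J.mul_mem_left _ hd : monomial c (1 : R) ∈ J)

lemma monomialExps_comap_rename (f : σ → τ) (J : Ideal (MvPolynomial τ R)) :
    monomialExps (J.comap (rename f : MvPolynomial σ R →ₐ[R] MvPolynomial τ R)) =
      Finsupp.mapDomain f ⁻¹' monomialExps J := by
  ext c
  simp [monomialExps, rename_monomial]

lemma monomialExps_colon_X (J : Ideal (MvPolynomial σ R)) (i : σ) :
    monomialExps (J.colon (Ideal.span {X i} : Ideal (MvPolynomial σ R))) =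
      (· + Finsupp.single i 1) ⁻¹' monomialExps J := by
  ext c
  simp [monomialExps, X, monomial_mul]

section Nontrivial

variable [Nontrivial R]

lemma monomial_one_mem_restrictSupport {s : Set (σ →₀ ℕ)} {c : σ →₀ ℕ} :
    monomial c (1 : R) ∈ restrictSupport R s ↔ c ∈ s := by
  simp

lemma disjoint_restrictSupport_iff {s t : Set (σ →₀ ℕ)} :
    Disjoint (restrictSupport R s) (restrictSupport R t) ↔ Disjoint s t := by
  refine ⟨fun h => Set.disjoint_left.2 fun c hs ht => ?_, disjoint_restrictSupport⟩
  have := Submodule.disjoint_def.1 h _ (monomial_one_mem_restrictSupport.2 hs)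
    (monomial_one_mem_restrictSupport.2 ht)
  simp at this

lemma restrictSupport_eq_top_iff {s : Set (σ →₀ ℕ)} :
    restrictSupport R s = ⊤ ↔ s = univ := by
  refine ⟨fun h => eq_univ_of_forall fun c => ?_, fun h => h ▸ restrictSupport_univ R⟩
  exact monomial_one_mem_restrictSupport.1 (h ▸ Submodule.mem_top)

lemma iSupIndep_restrictSupport_iff {ι : Type*} {s : ι → Set (σ →₀ ℕ)} :
    iSupIndep (fun i => restrictSupport R (s i)) ↔ Pairwise (Disjoint on s) := by
  refine ⟨fun h i j hij => disjoint_restrictSupport_iff.1 (h.pairwiseDisjoint hij),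
    fun h => iSupIndep_def.2 fun i => ?_⟩
  simp only [← restrictSupport_iUnion]
  exact disjoint_restrictSupport (disjoint_iUnion₂_right.2 fun j hj => h (Ne.symm hj))

lemma iSupIndep_restrictSupport_and_iSup_eq_top_iff {ι : Type*} {s : ι → Set (σ →₀ ℕ)} :
    (iSupIndep (fun i => restrictSupport R (s i)) ∧ ⨆ i, restrictSupport R (s i) = ⊤) ↔
      IsPartitionOf s univ := by
  rw [iSupIndep_restrictSupport_iff, ← restrictSupport_iUnion, restrictSupport_eq_top_iff]
  rfl

end Nontrivial

end CommSemiring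

variable [CommRing R]

noncomputable def basisQuotientOfRestrictScalarsEq {J : Ideal (MvPolynomial σ R)}
    {T : Set (σ →₀ ℕ)} (h : J.restrictScalars R = restrictSupport R T) :
    Module.Basis ↥Tᶜ R (MvPolynomial σ R ⧸ J) :=
  (basisRestrictSupport R Tᶜ).map <|
    ((Submodule.Quotient.restrictScalarsEquiv R J).symm ≪≫ₗ Submodule.quotEquivOfEq _ _ h ≪≫ₗ
      Submodule.quotientEquivOfIsCompl _ _
        ⟨disjoint_restrictSupport disjoint_compl_right, codisjoint_iff.2 (by
          rw [← restrictSupport_union, union_compl_self, restrictSupport_univ])⟩).symm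

end MvPolynomial

namespace Finsupp

lemma mapDomain_succ_eq_cons_zero {m : ℕ} (s : Fin m →₀ ℕ) :
    mapDomain Fin.succ s = cons 0 s := by
  ext i
  refine Fin.cases ?_ (fun j => ?_) i
  · exact mapDomain_of_notMem_range _ _ (by simp)
  · rw [mapDomain_apply (Fin.succ_injective m), cons_succ]

lemma range_cons_zero {m : ℕ} :
    range (cons 0 : (Fin m →₀ ℕ) → Fin (m + 1) →₀ ℕ) = {c | c 0 = 0} := by
  ext c
  refine ⟨?_, fun hc => ⟨tail c, by rw [← hc, cons_tail]⟩⟩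
  rintro ⟨s, rfl⟩
  exact cons_zero 0 s

lemma range_add_single_one {σ : Type*} (i : σ) :
    range (· + single i 1 : (σ →₀ ℕ) → σ →₀ ℕ) = {c | c i ≠ 0} := by
  ext c
  refine ⟨?_, fun hc => ⟨c - single i 1, tsub_add_cancel_of_le ?_⟩⟩
  · rintro ⟨s, rfl⟩
    simp
  · simpa [single_le_iff, Nat.one_le_iff_ne_zero] using hc

lemma isCompl_range_cons_zero_range_add_single {m : ℕ} :
    IsCompl (range (cons 0 : (Fin m →₀ ℕ) → Fin (m + 1) →₀ ℕ))
      (range (· + single 0 1 : (Fin (m + 1) →₀ ℕ) → Fin (m + 1) →₀ ℕ)) := by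
  rw [range_cons_zero, range_add_single_one]
  exact isCompl_compl

end Finsupp

lemma min_sSup_natCast_le {A B C : Set ℕ} (h : ∀ a ∈ A, ∀ b ∈ B, min a b ∈ C) :
    min (sSup ((↑) '' A : Set ℕ∞)) (sSup ((↑) '' B)) ≤ sSup ((↑) '' C) := by
  rw [sSup_inf_sSup]
  refine iSup₂_le ?_
  rintro ⟨_, _⟩ ⟨⟨a, ha, rfl⟩, ⟨b, hb, rfl⟩⟩
  exact le_sSup ⟨min a b, h a ha b hb, by norm_cast⟩

namespace Paper

variable {K : Type} [Field K] {n : ℕ}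

lemma image_mono_setOf_mem (J : Ideal (MvPolynomial (Fin n) K)) :
    mono K n '' {a | mono K n a ∈ J} = (monomial · 1) '' monomialExps J := by
  rw [show mono K n = (monomial · 1) ∘ Finsupp.equivFunOnFinite.symm from rfl, image_comp,
    Equiv.image_eq_preimage_symm]
  simp [monomialExps]

lemma isMonomialIdeal_iff {J : Ideal (MvPolynomial (Fin n) K)} :
    IsMonomialIdeal K n J ↔ ∀ p, p ∈ J ↔ ↑p.support ⊆ monomialExps J := by
  rw [IsMonomialIdeal, image_mono_setOf_mem]
  refine ⟨fun h p => by rw [← mem_span_monomialExps_iff, ← h], fun h => ?_⟩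
  exact le_antisymm (fun p hp => mem_span_monomialExps_iff.2 ((h p).1 hp))
    (span_monomialExps_le J)

namespace IsMonomialIdeal

variable {J : Ideal (MvPolynomial (Fin n) K)}

lemma mem_iff (hJ : IsMonomialIdeal K n J) {p : MvPolynomial (Fin n) K} :
    p ∈ J ↔ ↑p.support ⊆ monomialExps J :=
  isMonomialIdeal_iff.1 hJ p

lemma restrictScalars_eq (hJ : IsMonomialIdeal K n J) :
    J.restrictScalars K = restrictSupport K (monomialExps J) :=
  SetLike.ext fun _ => hJ.mem_iff

lemma comap_rename {k : ℕ} {f : Fin k → Fin n} (hf : Injective f) (hJ : IsMonomialIdeal K n J) :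
    IsMonomialIdeal K k
      (J.comap (rename f : MvPolynomial (Fin k) K →ₐ[K] MvPolynomial (Fin n) K)) := by
  classical
  refine isMonomialIdeal_iff.2 fun p => ?_
  rw [Ideal.mem_comap, hJ.mem_iff, support_rename_of_injective hf,
    Finset.coe_image, image_subset_iff, monomialExps_comap_rename]

lemma colon_X (hJ : IsMonomialIdeal K n J) (i : Fin n) :
    IsMonomialIdeal K n (J.colon (Ideal.span {X i} : Ideal (MvPolynomial (Fin n) K))) := by
  refine isMonomialIdeal_iff.2 fun p => ?_
  rw [Ideal.mem_colon_span_singleton, hJ.mem_iff, support_mul_X,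
    Finset.coe_map, image_subset_iff, monomialExps_colon_X]
  rfl

lemma restrictScalars_colon_X (hJ : IsMonomialIdeal K n J) (i : Fin n) :
    (J.colon (Ideal.span {X i} : Ideal (MvPolynomial (Fin n) K))).restrictScalars K =
      restrictSupport K ((· + Finsupp.single i 1) ⁻¹' monomialExps J) := by
  rw [(hJ.colon_X i).restrictScalars_eq, monomialExps_colon_X]

lemma restrictScalars_comap_rename_succ {m : ℕ} {I : Ideal (MvPolynomial (Fin (m + 1)) K)}
    (hI : IsMonomialIdeal K (m + 1) I) :
    (I.comap (rename Fin.succ : MvPolynomial (Fin m) K →ₐ[K] MvPolynomial (Fin (m + 1)) K)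
      ).restrictScalars K = restrictSupport K (Finsupp.cons 0 ⁻¹' monomialExps I) := by
  rw [(hI.comap_rename (Fin.succ_injective m)).restrictScalars_eq, monomialExps_comap_rename,
    funext Finsupp.mapDomain_succ_eq_cons_zero]

end IsMonomialIdeal

def stanleyExps (a : Fin n → ℕ) (Z : Finset (Fin n)) : Set (Fin n →₀ ℕ) :=
  {c | ∀ j, a j ≤ c j ∧ (j ∉ Z → c j = a j)}

lemma stanleySpace_eq_restrictSupport (a : Fin n → ℕ) (Z : Finset (Fin n)) :
    stanleySpace K n a Z = restrictSupport K (stanleyExps a Z) := by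
  rw [stanleySpace, restrictSupport_eq_span,
    show (fun e => mono K n (a + e)) =
      (monomial · 1) ∘ fun e => Finsupp.equivFunOnFinite.symm (a + e) from rfl, image_comp]
  congr 2
  ext c
  refine ⟨?_, fun hc => ⟨⇑c - a, fun j hj => by simp [(hc j).2 hj], ?_⟩⟩
  · rintro ⟨e, he, rfl⟩ j
    exact ⟨by simp, fun hj => by simp [he j hj]⟩
  · ext j
    simp [Nat.add_sub_cancel' (hc j).1]

lemma stanleyExps_add (a : Fin n → ℕ) (e : Fin n →₀ ℕ) (Z : Finset (Fin n)) :
    stanleyExps (a + ⇑e) Z = (· + e) '' stanleyExps a Z := by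
  ext c
  refine ⟨fun hc => ⟨c - e, fun j => ?_, tsub_add_cancel_of_le fun j => ?_⟩, ?_⟩
  · obtain ⟨hle, heq⟩ := hc j
    simp only [Pi.add_apply, Finsupp.tsub_apply] at hle heq ⊢
    exact ⟨by omega, fun hj => by have := heq hj; omega⟩
  · have := (hc j).1
    simp only [Pi.add_apply] at this
    omega
  · rintro ⟨s, hs, rfl⟩ j
    obtain ⟨hle, heq⟩ := hs j
    simp only [Pi.add_apply, Finsupp.add_apply]
    exact ⟨by omega, fun hj => by have := heq hj; omega⟩

lemma stanleyExps_cons_zero {m : ℕ} (a : Fin m → ℕ) (Z : Finset (Fin m)) :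
    stanleyExps (Fin.cons 0 a : Fin (m + 1) → ℕ) (Z.map (Fin.succEmb m)) =
      Finsupp.cons 0 '' stanleyExps a Z := by
  ext c
  constructor
  · intro hc
    have h0 : c 0 = 0 := by simpa using (hc 0).2 (by simp)
    refine ⟨Finsupp.tail c, fun j => ?_, by rw [← h0, Finsupp.cons_tail]⟩
    simpa [Finsupp.tail_apply] using hc j.succ
  · rintro ⟨s, hs, rfl⟩ j
    refine Fin.cases ?_ (fun j => ?_) j
    · simp
    · simpa using hs j

lemma isStanleyDecOfQuot_iff {t : ℕ} {J : Ideal (MvPolynomial (Fin n) K)} {T : Set (Fin n →₀ ℕ)}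
    (hJ : J.restrictScalars K = restrictSupport K T) (a : Fin t → Fin n → ℕ)
    (Z : Fin t → Finset (Fin n)) :
    IsStanleyDecOfQuot K n J t a Z ↔ IsPartitionOf (fun i => stanleyExps (a i) (Z i)) Tᶜ := by
  have hfam : (fun o : Option (Fin t) =>
      o.elim (J.restrictScalars K) fun i => stanleySpace K n (a i) (Z i)) =
      fun o => restrictSupport K (o.elim T fun i => stanleyExps (a i) (Z i)) := by
    funext o
    cases o
    exacts [hJ, stanleySpace_eq_restrictSupport _ _]
  rw [IsStanleyDecOfQuot, hfam, iSupIndep_restrictSupport_and_iSup_eq_top_iff,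
    isPartitionOf_option_elim_univ_iff]

variable {m : ℕ} {I : Ideal (MvPolynomial (Fin (m + 1)) K)}

lemma IsStanleyDecOfQuot.append (hI : IsMonomialIdeal K (m + 1) I) {t' t'' : ℕ}
    {a' : Fin t' → Fin m → ℕ} {Z' : Fin t' → Finset (Fin m)}
    {a'' : Fin t'' → Fin (m + 1) → ℕ} {Z'' : Fin t'' → Finset (Fin (m + 1))}
    (h' : IsStanleyDecOfQuot K m (I.comap (rename Fin.succ :
      MvPolynomial (Fin m) K →ₐ[K] MvPolynomial (Fin (m + 1)) K)) t' a' Z')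
    (h'' : IsStanleyDecOfQuot K (m + 1)
      (I.colon (Ideal.span {X 0} : Ideal (MvPolynomial (Fin (m + 1)) K))) t'' a'' Z'') :
    IsStanleyDecOfQuot K (m + 1) I (t' + t'')
      (Sum.elim (fun i => Fin.cons 0 (a' i)) (fun j => a'' j + ⇑(Finsupp.single 0 1)) ∘
        finSumFinEquiv.symm)
      (Sum.elim (fun i => (Z' i).map (Fin.succEmb m)) Z'' ∘ finSumFinEquiv.symm) := by
  rw [isStanleyDecOfQuot_iff hI.restrictScalars_comap_rename_succ] at h'
  rw [isStanleyDecOfQuot_iff (hI.restrictScalars_colon_X 0)] at h''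
  rw [isStanleyDecOfQuot_iff hI.restrictScalars_eq, ← isPartitionOf_comp_equiv_iff finSumFinEquiv,
    compl_eq_image_compl_preimage_union
      Finsupp.isCompl_range_cons_zero_range_add_single.codisjoint]
  convert h'.sumElim_image (Finsupp.cons_right_injective 0) (add_left_injective _)
    Finsupp.isCompl_range_cons_zero_range_add_single.disjoint h'' using 1
  funext x
  rcases x with i | j
  · simp [stanleyExps_cons_zero]
  · simp [stanleyExps_add]

lemma min_sdepthQuot_le_sdepthQuot (hI : IsMonomialIdeal K (m + 1) I) :
    min (sdepthQuot K m (I.comap (rename Fin.succ :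
        MvPolynomial (Fin m) K →ₐ[K] MvPolynomial (Fin (m + 1)) K)))
      (sdepthQuot K (m + 1) (I.colon (Ideal.span {X 0} : Ideal (MvPolynomial (Fin (m + 1)) K))))
      ≤ sdepthQuot K (m + 1) I := by
  refine min_sSup_natCast_le ?_
  rintro d' ⟨t', a', Z', hdec', hcard'⟩ d'' ⟨t'', a'', Z'', hdec'', hcard''⟩
  refine ⟨t' + t'', _, _, hdec'.append hI hdec'', fun k => ?_⟩
  rw [comp_apply]
  rcases finSumFinEquiv.symm k with i | j
  · simpa using (min_le_left _ _).trans (hcard' i)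
  · simpa using (min_le_right _ _).trans (hcard'' j)

noncomputable def quotientEquivProd (hI : IsMonomialIdeal K (m + 1) I) :
    (MvPolynomial (Fin (m + 1)) K ⧸ I) ≃ₗ[K]
      ((MvPolynomial (Fin m) K ⧸ I.comap (rename Fin.succ :
          MvPolynomial (Fin m) K →ₐ[K] MvPolynomial (Fin (m + 1)) K)) ×
        (MvPolynomial (Fin (m + 1)) K ⧸
          I.colon (Ideal.span {X 0} : Ideal (MvPolynomial (Fin (m + 1)) K)))) :=
  (basisQuotientOfRestrictScalarsEq hI.restrictScalars_eq).equiv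
    ((basisQuotientOfRestrictScalarsEq hI.restrictScalars_comap_rename_succ).prod
      (basisQuotientOfRestrictScalarsEq (hI.restrictScalars_colon_X 0)))
    (complEquivSumPreimageCompl (Finsupp.cons_right_injective 0) (add_left_injective _)
      Finsupp.isCompl_range_cons_zero_range_add_single _)

end Paper

open Paper
theorem sdepth_ge_min_of_split_general
    (K : Type) [Field K] (m : ℕ) (I : Ideal (MvPolynomial (Fin (m + 1)) K))
    (hI : IsMonomialIdeal K (m + 1) I) :
    Nonempty ((MvPolynomial (Fin (m + 1)) K ⧸ I) ≃ₗ[K]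
        ((MvPolynomial (Fin m) K ⧸ Ideal.comap (MvPolynomial.rename (Fin.succ) :
            MvPolynomial (Fin m) K →ₐ[K] MvPolynomial (Fin (m + 1)) K) I) ×
          (MvPolynomial (Fin (m + 1)) K ⧸
            Submodule.colon I (Ideal.span {(X 0 : MvPolynomial (Fin (m + 1)) K)})))) ∧
      sdepthQuot K (m + 1) I ≥
        min (sdepthQuot K m (Ideal.comap (MvPolynomial.rename (Fin.succ) :
              MvPolynomial (Fin m) K →ₐ[K] MvPolynomial (Fin (m + 1)) K) I))
          (sdepthQuot K (m + 1)
            (Submodule.colon I (Ideal.span {(X 0 : MvPolynomial (Fin (m + 1)) K)}))) :=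
  ⟨⟨quotientEquivProd hI⟩, min_sdepthQuot_le_sdepthQuot hI⟩

/-- For a monomial ideal `I` with `x_1 ∉ I`, letting `I' = I ∩ S'` and
`I'' = (I : x_1)`, one has a `K`-vector space decomposition
`S/I ≅ S'/I' ⊕ x_1(S/I'')`, whence `sdepth(S/I) ≥ min{sdepth(S'/I'), sdepth(S/I'')}`. -/
theorem sdepth_ge_min_of_split
    (K : Type) [Field K] (m : ℕ) (I : Ideal (MvPolynomial (Fin (m + 1)) K))
    (hI : IsMonomialIdeal K (m + 1) I)
    (hx : (X 0 : MvPolynomial (Fin (m + 1)) K) ∉ I) :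
    Nonempty ((MvPolynomial (Fin (m + 1)) K ⧸ I) ≃ₗ[K]
        ((MvPolynomial (Fin m) K ⧸ Ideal.comap (MvPolynomial.rename (Fin.succ) :
            MvPolynomial (Fin m) K →ₐ[K] MvPolynomial (Fin (m + 1)) K) I) ×
          (MvPolynomial (Fin (m + 1)) K ⧸
            Submodule.colon I (Ideal.span {(X 0 : MvPolynomial (Fin (m + 1)) K)})))) ∧
      sdepthQuot K (m + 1) I ≥
        min (sdepthQuot K m (Ideal.comap (MvPolynomial.rename (Fin.succ) :
              MvPolynomial (Fin m) K →ₐ[K] MvPolynomial (Fin (m + 1)) K) I))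
          (sdepthQuot K (m + 1)
            (Submodule.colon I (Ideal.span {(X 0 : MvPolynomial (Fin (m + 1)) K)}))) :=
  sdepth_ge_min_of_split_general K m I hI
end

section
/- Let I be a weakly polymatroidal ideal of S = K[x_1,...,x_n] with minimal generators u_1 >_purelex u_2 >_purelex ... >_purelex u_t, and suppose x_1 divides u_1,...,u_s but not u_{s+1},...,u_t, where 1 ≤ s ≤ t−1. Then for every i with s+2 ≤ i ≤ t, the colon ideal (u_1,...,u_{i-1}) : u_i contains x_1 together with (u_{s+1},...,u_{i-1}) : u_i, while x_1 ∉ (u_{s+1},...,u_{i-1}) : u_i. -/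
open MvPolynomial

open Paper

/-! Write `b = u i`, so `x₁ ∤ b`. The exchange property of a weakly polymatroidal ideal, applied
to `u 0` (divisible by `x₁`) and `b` at the first variable, yields a minimal generator `v` dividing
`x₁ b` with `x₁ ∣ v`. Then `v >_lex b`, so `v` is one of `u 0, …, u (i-1)`. On the other hand a
generator `u j` with `s ≤ j` dividing `x₁ b` is not divisible by `x₁`, hence divides `b`, and
minimality of the generators forces `u j = b`. -/

namespace Paper

variable {K : Type} [Field K] {n : ℕ}

lemma mono_add (v w : Fin n → ℕ) : mono K n (v + w) = mono K n v * mono K n w := by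
  rw [mono, mono, mono, monomial_mul, one_mul]
  congr 2
  ext k
  rfl

lemma X_eq_mono (i : Fin n) : (X i : MvPolynomial (Fin n) K) = mono K n (Pi.single i 1) := by
  classical
  rw [mono, ← Finsupp.single_eq_pi_single, Finsupp.equivFunOnFinite_symm_coe]
  rfl

lemma X_mul_mono (i : Fin n) (a : Fin n → ℕ) :
    X i * mono K n a = mono K n (a + Pi.single i 1) := by
  rw [X_eq_mono, mono_add, mul_comm]

lemma mono_mem_of_le {J : Ideal (MvPolynomial (Fin n) K)} {v w : Fin n → ℕ}
    (hvw : v ≤ w) (hv : mono K n v ∈ J) : mono K n w ∈ J := by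
  rw [← tsub_add_cancel_of_le hvw, mono_add]
  exact J.mul_mem_left _ hv

lemma mono_mem_monomialIdealOf_iff (A : Set (Fin n → ℕ)) (w : Fin n → ℕ) :
    mono K n w ∈ monomialIdealOf K n A ↔ ∃ a ∈ A, a ≤ w := by
  have himage : mono K n '' A =
      (fun s => monomial s (1 : K)) '' (Finsupp.equivFunOnFinite.symm '' A) := by
    rw [Set.image_image]; rfl
  classical
  rw [monomialIdealOf, himage, mem_ideal_span_monomial_image, mono, support_monomial,
    if_neg one_ne_zero]
  simp only [Finset.mem_singleton, forall_eq, Set.exists_mem_image]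
  rfl

lemma monomialIdealOf_mono {A B : Set (Fin n → ℕ)} (hAB : A ⊆ B) :
    monomialIdealOf K n A ≤ monomialIdealOf K n B :=
  Ideal.span_mono (Set.image_mono hAB)

lemma X_mem_colon_monomialIdealOf_iff (A : Set (Fin n → ℕ)) (i : Fin n) (b : Fin n → ℕ) :
    X i ∈ (monomialIdealOf K n A).colon (Ideal.span {mono K n b}) ↔
      ∃ a ∈ A, a ≤ b + Pi.single i 1 := by
  rw [Ideal.mem_colon_span_singleton, X_mul_mono, mono_mem_monomialIdealOf_iff]

lemma exists_mem_minGen_le {I : Ideal (MvPolynomial (Fin n) K)} {c : Fin n → ℕ}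
    (hc : mono K n c ∈ I) : ∃ v ∈ minGen K n I, v ≤ c := by
  obtain ⟨v, ⟨hvc, hv⟩, hmin⟩ :=
    wellFounded_lt.has_min {v | v ≤ c ∧ mono K n v ∈ I} ⟨c, le_rfl, hc⟩
  refine ⟨v, ⟨hv, fun i hi hvi => hmin _ ⟨tsub_le_self.trans hvc, hvi⟩ ?_⟩, hvc⟩
  exact Pi.lt_def.2 ⟨tsub_le_self, i, by simpa using hi⟩

lemma eq_of_le_of_mem_minGen {I : Ideal (MvPolynomial (Fin n) K)} {a b : Fin n → ℕ}
    (ha : mono K n a ∈ I) (hb : b ∈ minGen K n I) (hab : a ≤ b) : a = b := by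
  by_contra hne
  obtain ⟨-, i, hi⟩ := Pi.lt_def.1 (lt_of_le_of_ne hab hne)
  refine hb.2 i (by omega) (mono_mem_of_le (fun k => ?_) ha)
  rcases eq_or_ne k i with rfl | hk
  · simp only [Pi.sub_apply, Pi.single_eq_same]; omega
  · simpa [hk] using hab k

lemma le_of_le_add_single {a b : Fin n → ℕ} {i : Fin n} (h : a ≤ b + Pi.single i 1)
    (hi : a i ≤ b i) : a ≤ b := by
  intro k
  rcases eq_or_ne k i with rfl | hk
  · exact hi
  · simpa [hk] using h k

lemma WeaklyPolymatroidal.exists_mem_minGen_le_add_single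
    {I : Ideal (MvPolynomial (Fin n) K)} (hI : WeaklyPolymatroidal K n I)
    {a b : Fin n → ℕ} (ha : a ∈ minGen K n I) (hb : b ∈ minGen K n I) {t : Fin n}
    (hpre : ∀ s < t, a s = b s) (hlt : b t < a t) :
    ∃ v ∈ minGen K n I, v ≤ b + Pi.single t 1 ∧ b t < v t := by
  obtain ⟨j, htj, hbj, hc⟩ := hI.2 a b ha hb t hpre hlt
  obtain ⟨v, hv, hvc⟩ := exists_mem_minGen_le hc
  have hv_le : v ≤ b + Pi.single t 1 := hvc.trans tsub_le_self
  refine ⟨v, hv, hv_le, lt_of_not_ge fun hvt => ?_⟩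
  obtain rfl : v = b := eq_of_le_of_mem_minGen hv.1 hb (le_of_le_add_single hv_le hvt)
  have hvj := hvc j
  simp only [Pi.sub_apply, Pi.add_apply, Pi.single_eq_same, Pi.single_eq_of_ne htj.ne'] at hvj
  omega

end Paper

theorem colon_step_weaklyPolymatroidal_general
    (K : Type) [Field K] (m t s : ℕ) (I : Ideal (MvPolynomial (Fin (m + 1)) K))
    (hI : WeaklyPolymatroidal K (m + 1) I)
    (u : Fin t → (Fin (m + 1) → ℕ))
    (hinj : Function.Injective u)
    (hrange : Set.range u = minGen K (m + 1) I)
    (hsort : ∀ i j : Fin t, i < j → toLex (u j) < toLex (u i))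
    (hs1 : 1 ≤ s)
    (hdiv : ∀ i : Fin t, ((i : ℕ) < s ↔ 0 < u i 0)) :
    ∀ i : Fin t, s + 1 ≤ (i : ℕ) →
      ((X 0 : MvPolynomial (Fin (m + 1)) K) ∈
          Submodule.colon (monomialIdealOf K (m + 1) (u '' {j | (j : ℕ) < (i : ℕ)}))
            (Ideal.span {mono K (m + 1) (u i)}) ∧
        Submodule.colon (monomialIdealOf K (m + 1) (u '' {j | s ≤ (j : ℕ) ∧ (j : ℕ) < (i : ℕ)}))
            (Ideal.span {mono K (m + 1) (u i)}) ≤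
          Submodule.colon (monomialIdealOf K (m + 1) (u '' {j | (j : ℕ) < (i : ℕ)}))
            (Ideal.span {mono K (m + 1) (u i)})) ∧
      (X 0 : MvPolynomial (Fin (m + 1)) K) ∉
        Submodule.colon (monomialIdealOf K (m + 1) (u '' {j | s ≤ (j : ℕ) ∧ (j : ℕ) < (i : ℕ)}))
          (Ideal.span {mono K (m + 1) (u i)}) := by
  intro i hi
  have hgen : ∀ j, u j ∈ minGen K (m + 1) I := fun j => hrange ▸ Set.mem_range_self j
  have hzero : ∀ j : Fin t, s ≤ (j : ℕ) → u j 0 = 0 := fun j hj =>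
    Nat.eq_zero_of_not_pos (mt (hdiv j).2 (by omega))
  obtain ⟨v, hv, hv_le, hv0⟩ := hI.exists_mem_minGen_le_add_single (hgen ⟨0, by omega⟩) (hgen i)
    (fun j hj => absurd hj (Fin.not_lt_zero j)) (by rw [hzero i (by omega)]; exact (hdiv _).1 hs1)
  obtain ⟨k, rfl⟩ : v ∈ Set.range u := hrange ▸ hv
  have hki : k < i := (StrictAnti.lt_iff_gt (f := fun j => toLex (u j)) hsort).1
    ⟨0, fun j hj => absurd hj (Fin.not_lt_zero j), hv0⟩
  refine ⟨⟨(X_mem_colon_monomialIdealOf_iff _ _ _).2 ⟨u k, ⟨k, hki, rfl⟩, hv_le⟩,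
    Submodule.colon_mono (monomialIdealOf_mono (Set.image_mono fun j hj => hj.2)) subset_rfl⟩, ?_⟩
  intro hmem
  obtain ⟨_, ⟨j, ⟨hsj, hji⟩, rfl⟩, hj_le⟩ := (X_mem_colon_monomialIdealOf_iff _ _ _).1 hmem
  have hji' : u j = u i := eq_of_le_of_mem_minGen (hgen j).1 (hgen i)
    (le_of_le_add_single hj_le (by simp [hzero j hsj]))
  exact hji.ne (congrArg Fin.val (hinj hji'))

/-- key colon-ideal step. With `u_1 >_purelex … >_purelex u_t` the minimal
generators of a weakly polymatroidal ideal, `x_1 ∣ u_1,…,u_s` and `x_1 ∤ u_{s+1},…,u_t`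
(1-based; here 0-based), for every `i` with `s+2 ≤ i ≤ t` the colon ideal
`(u_1,…,u_{i-1}) : u_i` contains `x_1` and `(u_{s+1},…,u_{i-1}) : u_i`, while
`x_1 ∉ (u_{s+1},…,u_{i-1}) : u_i`. -/
theorem colon_step_weaklyPolymatroidal
    (K : Type) [Field K] (m t s : ℕ) (I : Ideal (MvPolynomial (Fin (m + 1)) K))
    (hI : WeaklyPolymatroidal K (m + 1) I)
    (u : Fin t → (Fin (m + 1) → ℕ))
    (hinj : Function.Injective u)
    (hrange : Set.range u = minGen K (m + 1) I)
    (hsort : ∀ i j : Fin t, i < j → toLex (u j) < toLex (u i))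
    (hs1 : 1 ≤ s) (hs2 : s ≤ t - 1)
    (hdiv : ∀ i : Fin t, ((i : ℕ) < s ↔ 0 < u i 0)) :
    ∀ i : Fin t, s + 1 ≤ (i : ℕ) →
      ((X 0 : MvPolynomial (Fin (m + 1)) K) ∈
          Submodule.colon (monomialIdealOf K (m + 1) (u '' {j | (j : ℕ) < (i : ℕ)}))
            (Ideal.span {mono K (m + 1) (u i)}) ∧
        Submodule.colon (monomialIdealOf K (m + 1) (u '' {j | s ≤ (j : ℕ) ∧ (j : ℕ) < (i : ℕ)}))
            (Ideal.span {mono K (m + 1) (u i)}) ≤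
          Submodule.colon (monomialIdealOf K (m + 1) (u '' {j | (j : ℕ) < (i : ℕ)}))
            (Ideal.span {mono K (m + 1) (u i)})) ∧
      (X 0 : MvPolynomial (Fin (m + 1)) K) ∉
        Submodule.colon (monomialIdealOf K (m + 1) (u '' {j | s ≤ (j : ℕ) ∧ (j : ℕ) < (i : ℕ)}))
          (Ideal.span {mono K (m + 1) (u i)}) :=
  colon_step_weaklyPolymatroidal_general K m t s I hI u hinj hrange hsort hs1 hdiv
end
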